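/- Let Y, X* be random variables on a finite probability space, Δ a binary indicator with φ(y,x) := P(Δ=1 | Y=y, X*=x) > 0. Then for every x with P(X*=x, Δ=1) > 0, P(Δ=1 | X*=x) = ( E[ 1/φ(Y, x) | Δ=1, X*=x ] )^{-1}. -/

import Mathlib

open scoped BigOperators
attribute [local instance] Classical.propDecidable

/-- Probability of an event under weight function `p` on a finite space. -/
noncomputable def Pr {Ω : Type*} [Fintype Ω] (p : Ω → ℝ) (A : Set Ω) : ℝ :=
  ∑ ω, if ω ∈ A then p ω else 0

/-- Conditional probability of `A` given `B`. -/
noncomputable def condPr {Ω : Type*} [Fintype Ω] (p : Ω → ℝ) (A B : Set Ω) : ℝ :=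
  Pr p (A ∩ B) / Pr p B

/-- Conditional expectation of `f` given event `B`. -/
noncomputable def condE {Ω : Type*} [Fintype Ω] (p : Ω → ℝ) (f : Ω → ℝ) (B : Set Ω) : ℝ :=
  (∑ ω, if ω ∈ B then p ω * f ω else 0) / Pr p B

/-- Expectation of `f`. -/
noncomputable def Ex {Ω : Type*} [Fintype Ω] (p : Ω → ℝ) (f : Ω → ℝ) : ℝ :=
  ∑ ω, p ω * f ω

/-!
On a fibre `{Y = y, X = x}` the weight `1 / φ` is the constant
`Pr {Y = y, X = x} / Pr {Δ = 1, Y = y, X = x}`, so integrating it over the selected part of the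
fibre returns the mass `Pr {Y = y, X = x}` of the whole fibre (a null fibre contributes `0` on both
sides). Summing over `y` gives `∑_{Δ = 1, X = x} p / φ(Y, x) = Pr {X = x}`; dividing by
`Pr {Δ = 1, X = x}` turns this into the reciprocal of `P(Δ = 1 | X = x)`.
-/

section FiniteWeights

variable {Ω α : Type*} [Fintype Ω] (p : Ω → ℝ)

theorem Pr_nonneg (hp : ∀ ω, 0 ≤ p ω) (S : Set Ω) : 0 ≤ Pr p S :=
  Finset.sum_nonneg fun ω _ => by split_ifs <;> simp [hp ω]

theorem sum_ite_mem_mul_comp_eq_sum_Pr_fiber (S : Set Ω) (Y : Ω → α) (g : α → ℝ) :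
    (∑ ω, if ω ∈ S then p ω * g (Y ω) else 0)
      = ∑ y ∈ Finset.univ.image Y, Pr p ({ω | Y ω = y} ∩ S) * g y := by
  rw [← Finset.sum_fiberwise_of_maps_to fun ω _ => Finset.mem_image_of_mem Y (Finset.mem_univ ω)]
  refine Finset.sum_congr rfl fun y _ => ?_
  rw [Finset.sum_filter, Pr, Finset.sum_mul]
  refine Finset.sum_congr rfl fun ω _ => ?_
  by_cases hY : Y ω = y <;> by_cases hS : ω ∈ S <;> simp [hY, hS]

theorem Pr_eq_sum_Pr_fiber (S : Set Ω) (Y : Ω → α) :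
    Pr p S = ∑ y ∈ Finset.univ.image Y, Pr p ({ω | Y ω = y} ∩ S) := by
  simpa [Pr] using sum_ite_mem_mul_comp_eq_sum_Pr_fiber p S Y 1

theorem Pr_inter_mul_one_div_condPr (hp : ∀ ω, 0 ≤ p ω) {E F : Set Ω}
    (hpos : 0 < Pr p F → 0 < condPr p E F) : Pr p (E ∩ F) * (1 / condPr p E F) = Pr p F := by
  rcases (Pr_nonneg p hp F).eq_or_lt with hF | hF
  · simp [condPr, ← hF]
  · have hEF : Pr p (E ∩ F) ≠ 0 := by
      have := hpos hF
      rw [condPr] at this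
      exact (div_pos_iff_of_pos_right hF).1 this |>.ne'
    rw [condPr]
    field_simp

theorem condE_one_div_condPr_fiber_eq_inv_condPr (hp : ∀ ω, 0 ≤ p ω) (E B : Set Ω) (Y : Ω → α)
    (hpos : ∀ y, 0 < Pr p ({ω | Y ω = y} ∩ B) → 0 < condPr p E ({ω | Y ω = y} ∩ B)) :
    condE p (fun ω => 1 / condPr p E ({ω' | Y ω' = Y ω} ∩ B)) (E ∩ B) = (condPr p E B)⁻¹ := by
  have fibre : ∀ y, Pr p ({ω | Y ω = y} ∩ (E ∩ B)) * (1 / condPr p E ({ω | Y ω = y} ∩ B))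
      = Pr p ({ω | Y ω = y} ∩ B) := fun y => by
    rw [Set.inter_left_comm]
    exact Pr_inter_mul_one_div_condPr p hp (hpos y)
  rw [condE, sum_ite_mem_mul_comp_eq_sum_Pr_fiber p (E ∩ B) Y
    (fun y => 1 / condPr p E ({ω | Y ω = y} ∩ B))]
  simp only [fibre]
  rw [← Pr_eq_sum_Pr_fiber, condPr, inv_div]

end FiniteWeights

theorem stmt3_general {Ω α β : Type*} [Fintype Ω]
    (p : Ω → ℝ) (hp : ∀ ω, 0 ≤ p ω)
    (Y : Ω → α) (X : Ω → β) (D : Ω → Bool)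
    (φ : α → β → ℝ)
    (hφdef : ∀ y x, φ y x =
      condPr p {ω' | D ω' = true} {ω' | Y ω' = y ∧ X ω' = x})
    (hφpos : ∀ y x, 0 < Pr p {ω' | Y ω' = y ∧ X ω' = x} → 0 < φ y x) :
    ∀ x, 0 < Pr p {ω' | X ω' = x ∧ D ω' = true} →
      condPr p {ω' | D ω' = true} {ω' | X ω' = x}
        = (condE p (fun ω' => 1 / φ (Y ω') x) {ω' | D ω' = true ∧ X ω' = x})⁻¹ := by
  intro x _
  simp only [hφdef] at hφpos ⊢
  exact inv_eq_iff_eq_inv.mp <| Eq.symm <|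
    condE_one_div_condPr_fiber_eq_inv_condPr p hp {ω | D ω = true} {ω | X ω = x} Y
      fun y => hφpos y x

/-- harmonic-mean representation:
`P(Δ=1 | X*=x) = (E[1/φ(Y,x) | Δ=1, X*=x])⁻¹`. -/
theorem stmt3 {Ω α β : Type*} [Fintype Ω]
    (p : Ω → ℝ) (hp : ∀ ω, 0 ≤ p ω) (hsum : ∑ ω, p ω = 1)
    (Y : Ω → α) (X : Ω → β) (D : Ω → Bool)
    (φ : α → β → ℝ)
    (hφdef : ∀ y x, φ y x =
      condPr p {ω' | D ω' = true} {ω' | Y ω' = y ∧ X ω' = x})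
    (hφpos : ∀ y x, 0 < Pr p {ω' | Y ω' = y ∧ X ω' = x} → 0 < φ y x) :
    ∀ x, 0 < Pr p {ω' | X ω' = x ∧ D ω' = true} →
      condPr p {ω' | D ω' = true} {ω' | X ω' = x}
        = (condE p (fun ω' => 1 / φ (Y ω') x) {ω' | D ω' = true ∧ X ω' = x})⁻¹ :=
  stmt3_general p hp Y X D φ hφdef hφpos
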